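/- Non-cooperative game, case d0 = 0 (uniqueness): suppose the two buses have the same starting position, x0 = y0, and that pλ > 0. If (v_x, v_y) ∈ Γ × Γ is a pure Nash equilibrium, i.e., u_x(x0, v, y0, v_y) ≤ u_x(x0, v_x, y0, v_y) and u_y(x0, v_x, y0, v) ≤ u_y(x0, v_x, y0, v_y) for all v ∈ Γ, then v_x = v_max and v_y = v_max. -/
import Mathlib


/-- The reduction of a real number `r` modulo the circuit length `D`: the relative
position on the torus, `(r) mod D = r − D·⌊r/D⌋ ∈ [0, D)`. -/
noncomputable def modD (D r : ℝ) : ℝ := r - D * (⌊r / D⌋ : ℝ)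

/-- The directed (clockwise) distance from `x` to `y` on the circuit of length `D`. -/
noncomputable def dirX (D x y : ℝ) : ℝ := if x ≤ y then y - x else D + y - x

/-- The directed (clockwise) distance from `y` to `x` on the circuit of length `D`. -/
noncomputable def dirY (D x y : ℝ) : ℝ := dirX D y x

/-- Utility of player x: starting from `x0` and `y0`, driving at speeds `vx`, `vy`
for time `T`, with fare `p`, passenger rate `lam` and cost rate `c`. -/
noncomputable def uX (D p lam c T x0 y0 vx vy : ℝ) : ℝ :=
  if modD D (x0 + T * vx) ≠ modD D (y0 + T * vy) then
    p * lam * dirX D (modD D (x0 + T * vx)) (modD D (y0 + T * vy)) - c * T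
  else p * lam * (D / 2) - c * T

/-- Utility of player y, defined like `uX` with the directed distance `dirY`. -/
noncomputable def uY (D p lam c T x0 y0 vx vy : ℝ) : ℝ :=
  if modD D (x0 + T * vx) ≠ modD D (y0 + T * vy) then
    p * lam * dirY D (modD D (x0 + T * vx)) (modD D (y0 + T * vy)) - c * T
  else p * lam * (D / 2) - c * T

lemma modD_mem (D : ℝ) (hD : 0 < D) (r : ℝ) : modD D r ∈ Set.Ico 0 D := by
  have h1 : (⌊r / D⌋ : ℝ) ≤ r / D := Int.floor_le _
  have h2 : r / D < ⌊r / D⌋ + 1 := Int.lt_floor_add_one _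
  have hDr : D * (r / D) = r := mul_div_cancel₀ r hD.ne'
  constructor
  · have := mul_le_mul_of_nonneg_left h1 hD.le
    rw [hDr] at this; unfold modD; linarith
  · have := mul_lt_mul_of_pos_left h2 hD
    rw [hDr] at this; unfold modD; nlinarith

lemma modD_eq_self (D : ℝ) (hD : 0 < D) (r : ℝ) (h0 : 0 ≤ r) (h1 : r < D) :
    modD D r = r := by
  have : ⌊r / D⌋ = 0 := by
    rw [Int.floor_eq_zero_iff]
    constructor
    · exact div_nonneg h0 hD.le
    · rw [div_lt_one hD]; simpa using h1
  unfold modD; rw [this]; simp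

lemma modD_add_int (D : ℝ) (hD : 0 < D) (r : ℝ) (k : ℤ) :
    modD D (r + k * D) = modD D r := by
  unfold modD
  have h : (r + k * D) / D = r / D + k := by field_simp
  rw [h, Int.floor_add_intCast]; push_cast; ring

lemma dirX_modD (D : ℝ) (hD : 0 < D) (s t : ℝ) :
    dirX D (modD D s) (modD D t) = modD D (t - s) := by
  set x := modD D s with hxdef
  set y := modD D t with hydef
  have hx := modD_mem D hD s
  have hy := modD_mem D hD t
  have key : t - s = (y - x) + ((⌊t / D⌋ - ⌊s / D⌋ : ℤ) : ℝ) * D := by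
    rw [hxdef, hydef]; unfold modD; push_cast; ring
  rw [key, modD_add_int D hD]
  unfold dirX
  split
  · exact (modD_eq_self D hD _ (by linarith [hx.1]) (by linarith [hy.2, hx.1])).symm
  · rename_i h
    push_neg at h
    have : modD D (y - x) = modD D ((y - x + D) + (-1 : ℤ) * D) := by norm_num
    rw [this, modD_add_int D hD,
      modD_eq_self D hD _ (by linarith [hy.1, hx.2]) (by linarith)]
    ring

lemma uY_swap (D p lam c T x0 y0 vx vy : ℝ) :
    uY D p lam c T x0 y0 vx vy = uX D p lam c T y0 x0 vy vx := by
  unfold uY uX dirY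
  by_cases h : modD D (x0 + T * vx) = modD D (y0 + T * vy)
  · rw [if_neg (by simpa using h), if_neg (by simpa using h.symm)]
  · rw [if_pos h, if_pos (Ne.symm h)]

lemma modD_pos_ne (D : ℝ) (hD : 0 < D) (s t : ℝ) (h : modD D (t - s) ≠ 0) :
    modD D s ≠ modD D t := by
  intro heq
  have h1 := dirX_modD D hD s t
  rw [heq] at h1
  have : dirX D (modD D t) (modD D t) = 0 := by unfold dirX; simp
  rw [this] at h1
  exact h h1.symm

lemma uX_eval_lt (D p lam c T x0 v w : ℝ) (hD : 0 < D) (hT : 0 < T)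
    (h : v < w) (hb : T * (w - v) < D) :
    uX D p lam c T x0 x0 v w = p * lam * (T * (w - v)) - c * T := by
  have hpos : 0 < T * (w - v) := by nlinarith
  have hmod : modD D ((x0 + T * w) - (x0 + T * v)) = T * (w - v) := by
    rw [show (x0 + T * w) - (x0 + T * v) = T * (w - v) by ring]
    exact modD_eq_self D hD _ hpos.le hb
  have hne : modD D (x0 + T * v) ≠ modD D (x0 + T * w) :=
    modD_pos_ne D hD _ _ (by rw [hmod]; exact hpos.ne')
  unfold uX
  rw [if_pos hne, dirX_modD D hD, hmod]

lemma uX_eval_gt (D p lam c T x0 v w : ℝ) (hD : 0 < D) (hT : 0 < T)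
    (h : w < v) (hb : T * (v - w) < D) :
    uX D p lam c T x0 x0 v w = p * lam * (D - T * (v - w)) - c * T := by
  have hpos : 0 < T * (v - w) := by nlinarith
  have hmod : modD D ((x0 + T * w) - (x0 + T * v)) = D - T * (v - w) := by
    rw [show (x0 + T * w) - (x0 + T * v) = (D - T * (v - w)) + (-1 : ℤ) * D by push_cast; ring,
      modD_add_int D hD]
    exact modD_eq_self D hD _ (by linarith) (by linarith)
  have hne : modD D (x0 + T * v) ≠ modD D (x0 + T * w) :=
    modD_pos_ne D hD _ _ (by rw [hmod]; exact ne_of_gt (by linarith))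
  unfold uX
  rw [if_pos hne, dirX_modD D hD, hmod]

lemma uX_eval_eq (D p lam c T x0 v : ℝ) :
    uX D p lam c T x0 x0 v v = p * lam * (D / 2) - c * T := by
  unfold uX; simp

/-- Non-cooperative game, case d₀ = 0 (uniqueness): if the two buses start at the same
position and pλ > 0, then any pure Nash equilibrium is (v_max, v_max). -/
theorem same_start_nash_unique
    (D p lam c T vmin vmax x0 y0 : ℝ)
    (hD : 0 < D) (hvmin : 0 < vmin) (hvv : vmin ≤ vmax) (hT : 0 < T)
    (hshort : T * vmax < D / 2)
    (hp : 0 ≤ p) (hlam : 0 < lam) (hc : 0 ≤ c) (hplam : 0 < p * lam)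
    (hx0 : x0 ∈ Set.Ico 0 D) (hy0 : y0 ∈ Set.Ico 0 D)
    (hsame : x0 = y0)
    (vx vy : ℝ) (hvx : vx ∈ Set.Icc vmin vmax) (hvy : vy ∈ Set.Icc vmin vmax)
    (hNEx : ∀ v ∈ Set.Icc vmin vmax,
      uX D p lam c T x0 y0 v vy ≤ uX D p lam c T x0 y0 vx vy)
    (hNEy : ∀ v ∈ Set.Icc vmin vmax,
      uY D p lam c T x0 y0 vx v ≤ uY D p lam c T x0 y0 vx vy) :
    vx = vmax ∧ vy = vmax := by
  subst hsame
  obtain ⟨hvx1, hvx2⟩ := hvx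
  obtain ⟨hvy1, hvy2⟩ := hvy
  have hbound : ∀ a b : ℝ, a ≤ vmax → vmin ≤ b → T * (a - b) < D := by
    intro a b ha hb
    have hTb : 0 < T * b := mul_pos hT (hvmin.trans_le hb)
    nlinarith
  -- Step 1: vx ≤ vy
  have h1 : vx ≤ vy := by
    by_contra h
    push_neg at h
    set v' := (vx + vy) / 2 with hv'
    have hvy' : vy < v' := by simp only [hv']; linarith
    have hv'x : v' < vx := by simp only [hv']; linarith
    have hx := hNEx v' ⟨by linarith, by linarith⟩
    rw [uX_eval_gt D p lam c T x0 v' vy hD hT hvy' (hbound _ _ (by linarith) hvy1),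
        uX_eval_gt D p lam c T x0 vx vy hD hT h (hbound _ _ hvx2 hvy1)] at hx
    nlinarith [mul_pos hplam (mul_pos hT (by linarith : (0:ℝ) < vx - v'))]
  -- Step 2: vy ≤ vx
  have h2 : vy ≤ vx := by
    by_contra h
    push_neg at h
    set v' := (vx + vy) / 2 with hv'
    have hvx' : vx < v' := by simp only [hv']; linarith
    have hv'y : v' < vy := by simp only [hv']; linarith
    have hy := hNEy v' ⟨by linarith, by linarith⟩
    rw [uY_swap, uY_swap,
        uX_eval_gt D p lam c T x0 v' vx hD hT hvx' (hbound _ _ (by linarith) hvx1),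
        uX_eval_gt D p lam c T x0 vy vx hD hT h (hbound _ _ hvy2 hvx1)] at hy
    nlinarith [mul_pos hplam (mul_pos hT (by linarith : (0:ℝ) < vy - v'))]
  have hxy : vx = vy := le_antisymm h1 h2
  -- Step 3: vx = vmax
  have h3 : vx = vmax := by
    by_contra h
    have hlt : vx < vmax := lt_of_le_of_ne hvx2 h
    have hx := hNEx vmax ⟨hvv, le_refl _⟩
    rw [hxy, uX_eval_eq,
        uX_eval_gt D p lam c T x0 vmax vy hD hT (hxy ▸ hlt) (hbound _ _ (le_refl _) hvy1)] at hx
    have hTvy : 0 < T * vy := mul_pos hT (hvmin.trans_le hvy1)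
    nlinarith [mul_pos hplam (by nlinarith : (0:ℝ) < D / 2 - T * (vmax - vy))]
  exact ⟨h3, hxy ▸ h3⟩
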